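/- Let μ > 0 and let e, σ, γ be as defined. For every T > 0 there is a constant C > 0 such that for all t, s with 0 < |s| < t ≤ T, writing p = (t+s)/2 and l = (t−s)/2, the following four bounds hold: (i) | e(t/2)/(e(p) + e(l)) − 1/2 | ≤ C·s²; (ii) | p·l/(e(p)·e(l)) − t²/(4·e(t/2)²) | ≤ C·s²; (iii) | σ(p)·σ(l)·√(e(p)·e(l)) − σ(t/2)²·e(t/2) | ≤ C·s²; (iv) | γ(p)·γ(l)·√(e(p)·e(l)) − γ(t/2)²·e(t/2) | ≤ C·s². -/

import Mathlib

/-!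
Everything is governed by the phase velocity `v k = disp μ k / k = √(μ + k²/4) ≥ √μ`: one has
`sig μ k * √(2 disp μ k) = v k + k/2` and `gam μ k * √(2 disp μ k) = v k - k/2`, so with
`p = m + d`, `l = m - d` all four quantities are expressed through the first difference
`v p - v l`, the second difference `v p + v l - 2 v m` and the product defect `v p v l - (v m)²`.
Each of these is bounded by multiplying it with its conjugate: `(v p - v l)(v p + v l) = m d`,
`(v p v l)² - (v m)⁴ = d² (μ/2 - m²/8 + d²/16)` and
`(v p + v l)² - 4 (v m)² = 2 (v p v l - (v m)²) + d²/2`, and the conjugate factors are bounded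
below by multiples of `√μ`.
-/

open Real Filter Asymptotics Topology MeasureTheory

/-- Bogoliubov dispersion relation (contact interaction). -/
noncomputable def disp (μ k : ℝ) : ℝ := Real.sqrt (k^4/4 + μ*k^2)

/-- Bogoliubov coefficient σ. -/
noncomputable def sig (μ k : ℝ) : ℝ :=
  Real.sqrt ((Real.sqrt ((disp μ k)^2 + μ^2) + disp μ k) / (2 * disp μ k))

/-- Bogoliubov coefficient γ. -/
noncomputable def gam (μ k : ℝ) : ℝ :=
  Real.sqrt ((Real.sqrt ((disp μ k)^2 + μ^2) - disp μ k) / (2 * disp μ k))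

lemma abs_sub_le_of_mul_add_eq {x y r δ : ℝ} (h : (x - y) * (x + y) = r) (hδ : 0 < δ)
    (hxy : δ ≤ x + y) : |x - y| ≤ |r| / δ := by
  rw [le_div_iff₀ hδ, ← h, abs_mul, abs_of_pos (hδ.trans_le hxy)]
  exact mul_le_mul_of_nonneg_left hxy (abs_nonneg _)

lemma div_sqrt_mul_div_sqrt_mul_sqrt {u w : ℝ} (hu : 0 < u) (hw : 0 < w) (x y : ℝ) :
    x / √(2 * u) * (y / √(2 * w)) * √(u * w) = x * y / 2 := by
  rw [Real.sqrt_mul hu.le, Real.sqrt_mul' 2 hu.le, Real.sqrt_mul' 2 hw.le]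
  have : 0 < √u := Real.sqrt_pos.2 hu
  have : 0 < √w := Real.sqrt_pos.2 hw
  field_simp
  rw [Real.sq_sqrt zero_le_two]
  ring

lemma div_sqrt_sq_mul {u : ℝ} (hu : 0 < u) (x : ℝ) : (x / √(2 * u)) ^ 2 * u = x ^ 2 / 2 := by
  rw [div_pow, Real.sq_sqrt (by positivity)]
  field_simp

noncomputable def phaseVel (μ k : ℝ) : ℝ := √(μ + k ^ 2 / 4)

section

variable {μ : ℝ}

lemma phaseVel_sq (hμ : 0 ≤ μ) (k : ℝ) : phaseVel μ k ^ 2 = μ + k ^ 2 / 4 :=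
  Real.sq_sqrt (by positivity)

lemma sqrt_le_phaseVel (k : ℝ) : √μ ≤ phaseVel μ k :=
  Real.sqrt_le_sqrt (le_add_of_nonneg_right (by positivity))

lemma half_le_phaseVel (hμ : 0 ≤ μ) (k : ℝ) : k / 2 ≤ phaseVel μ k :=
  Real.le_sqrt_of_sq_le (by linarith)

lemma phaseVel_pos (hμ : 0 < μ) (k : ℝ) : 0 < phaseVel μ k :=
  (Real.sqrt_pos.2 hμ).trans_le (sqrt_le_phaseVel k)

lemma le_phaseVel_mul_phaseVel (hμ : 0 ≤ μ) (k k' : ℝ) : μ ≤ phaseVel μ k * phaseVel μ k' :=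
  calc μ = √μ * √μ := (Real.mul_self_sqrt hμ).symm
    _ ≤ _ := mul_le_mul (sqrt_le_phaseVel k) (sqrt_le_phaseVel k') (Real.sqrt_nonneg μ)
        ((Real.sqrt_nonneg μ).trans (sqrt_le_phaseVel k))

lemma disp_eq_mul_phaseVel {k : ℝ} (hk : 0 ≤ k) : disp μ k = k * phaseVel μ k := by
  rw [disp, phaseVel, show k ^ 4 / 4 + μ * k ^ 2 = k ^ 2 * (μ + k ^ 2 / 4) by ring,
    Real.sqrt_mul (sq_nonneg k), Real.sqrt_sq hk]

lemma disp_pos (hμ : 0 ≤ μ) {k : ℝ} (hk : 0 < k) : 0 < disp μ k := by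
  rw [disp_eq_mul_phaseVel hk.le]
  exact mul_pos hk (by linarith [half_le_phaseVel hμ k])

lemma sqrt_disp_sq_add_sq (hμ : 0 ≤ μ) (k : ℝ) : √(disp μ k ^ 2 + μ ^ 2) = k ^ 2 / 2 + μ := by
  rw [disp, Real.sq_sqrt (by positivity),
    show k ^ 4 / 4 + μ * k ^ 2 + μ ^ 2 = (k ^ 2 / 2 + μ) ^ 2 by ring, Real.sqrt_sq (by positivity)]

lemma sig_eq (hμ : 0 ≤ μ) {k : ℝ} (hk : 0 ≤ k) :
    sig μ k = (phaseVel μ k + k / 2) / √(2 * disp μ k) := by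
  have h : √(disp μ k ^ 2 + μ ^ 2) + disp μ k = (phaseVel μ k + k / 2) ^ 2 := by
    rw [sqrt_disp_sq_add_sq hμ, disp_eq_mul_phaseVel hk]
    linear_combination -phaseVel_sq hμ k
  rw [sig, h, Real.sqrt_div (sq_nonneg _), Real.sqrt_sq (by linarith [half_le_phaseVel hμ k])]

lemma gam_eq (hμ : 0 ≤ μ) {k : ℝ} (hk : 0 ≤ k) :
    gam μ k = (phaseVel μ k - k / 2) / √(2 * disp μ k) := by
  have h : √(disp μ k ^ 2 + μ ^ 2) - disp μ k = (phaseVel μ k - k / 2) ^ 2 := by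
    rw [sqrt_disp_sq_add_sq hμ, disp_eq_mul_phaseVel hk]
    linear_combination -phaseVel_sq hμ k
  rw [gam, h, Real.sqrt_div (sq_nonneg _), Real.sqrt_sq (sub_nonneg.2 (half_le_phaseVel hμ k))]

lemma sig_mul_sig_mul_sqrt_disp {p l : ℝ} (hμ : 0 ≤ μ) (hp : 0 < p) (hl : 0 < l) :
    sig μ p * sig μ l * √(disp μ p * disp μ l) =
      (phaseVel μ p + p / 2) * (phaseVel μ l + l / 2) / 2 := by
  rw [sig_eq hμ hp.le, sig_eq hμ hl.le,
    div_sqrt_mul_div_sqrt_mul_sqrt (disp_pos hμ hp) (disp_pos hμ hl)]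

lemma sig_sq_mul_disp (hμ : 0 ≤ μ) {k : ℝ} (hk : 0 < k) :
    sig μ k ^ 2 * disp μ k = (phaseVel μ k + k / 2) ^ 2 / 2 := by
  rw [sig_eq hμ hk.le, div_sqrt_sq_mul (disp_pos hμ hk)]

lemma gam_mul_gam_mul_sqrt_disp {p l : ℝ} (hμ : 0 ≤ μ) (hp : 0 < p) (hl : 0 < l) :
    gam μ p * gam μ l * √(disp μ p * disp μ l) =
      (phaseVel μ p - p / 2) * (phaseVel μ l - l / 2) / 2 := by
  rw [gam_eq hμ hp.le, gam_eq hμ hl.le,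
    div_sqrt_mul_div_sqrt_mul_sqrt (disp_pos hμ hp) (disp_pos hμ hl)]

lemma gam_sq_mul_disp (hμ : 0 ≤ μ) {k : ℝ} (hk : 0 < k) :
    gam μ k ^ 2 * disp μ k = (phaseVel μ k - k / 2) ^ 2 / 2 := by
  rw [gam_eq hμ hk.le, div_sqrt_sq_mul (disp_pos hμ hk)]

lemma abs_phaseVel_sub_phaseVel_le (hμ : 0 < μ) (m d : ℝ) :
    |phaseVel μ (m + d) - phaseVel μ (m - d)| ≤ |m * d| / (2 * √μ) :=
  abs_sub_le_of_mul_add_eq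
    (by linear_combination phaseVel_sq hμ.le (m + d) - phaseVel_sq hμ.le (m - d))
    (by positivity)
    (by linarith [sqrt_le_phaseVel (μ := μ) (m + d), sqrt_le_phaseVel (μ := μ) (m - d)])

lemma exists_abs_phaseVel_mul_sub_sq_le (hμ : 0 < μ) (R : ℝ) :
    ∃ A > 0, ∀ m d, |d| ≤ m → m ≤ R →
      |phaseVel μ (m + d) * phaseVel μ (m - d) - phaseVel μ m ^ 2| ≤ A * d ^ 2 := by
  refine ⟨(μ / 2 + R ^ 2 / 8) / (2 * μ), by positivity, fun m d hd hm => ?_⟩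
  have hm0 : 0 ≤ m := (abs_nonneg d).trans hd
  have hdm : d ^ 2 ≤ m ^ 2 := sq_le_sq.2 (hd.trans (le_abs_self m))
  have hmR := pow_le_pow_left₀ hm0 hm 2
  have key : (phaseVel μ (m + d) * phaseVel μ (m - d) - phaseVel μ m ^ 2) *
      (phaseVel μ (m + d) * phaseVel μ (m - d) + phaseVel μ m ^ 2) =
        d ^ 2 * (μ / 2 - m ^ 2 / 8 + d ^ 2 / 16) := by
    linear_combination (μ + (m - d) ^ 2 / 4) * phaseVel_sq hμ.le (m + d) +
      phaseVel μ (m + d) ^ 2 * phaseVel_sq hμ.le (m - d) -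
      (phaseVel μ m ^ 2 + μ + m ^ 2 / 4) * phaseVel_sq hμ.le m
  have hbound : |μ / 2 - m ^ 2 / 8 + d ^ 2 / 16| ≤ μ / 2 + R ^ 2 / 8 :=
    abs_le.2 ⟨by linarith [sq_nonneg d], by linarith [sq_nonneg m]⟩
  calc _ ≤ |d ^ 2 * (μ / 2 - m ^ 2 / 8 + d ^ 2 / 16)| / (2 * μ) :=
        abs_sub_le_of_mul_add_eq key (by positivity)
          (by linarith [le_phaseVel_mul_phaseVel hμ.le (m + d) (m - d), phaseVel_sq hμ.le m,
            sq_nonneg m])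
    _ ≤ d ^ 2 * (μ / 2 + R ^ 2 / 8) / (2 * μ) := by
        rw [abs_mul, abs_of_nonneg (sq_nonneg d)]
        gcongr
    _ = _ := by ring

lemma exists_abs_phaseVel_add_sub_two_mul_le (hμ : 0 < μ) (R : ℝ) :
    ∃ B > 0, ∀ m d, |d| ≤ m → m ≤ R →
      |phaseVel μ (m + d) + phaseVel μ (m - d) - 2 * phaseVel μ m| ≤ B * d ^ 2 := by
  obtain ⟨A, hA, hprod⟩ := exists_abs_phaseVel_mul_sub_sq_le hμ R
  refine ⟨(2 * A + 1 / 2) / (4 * √μ), by positivity, fun m d hd hm => ?_⟩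
  have key : (phaseVel μ (m + d) + phaseVel μ (m - d) - 2 * phaseVel μ m) *
      (phaseVel μ (m + d) + phaseVel μ (m - d) + 2 * phaseVel μ m) =
        2 * (phaseVel μ (m + d) * phaseVel μ (m - d) - phaseVel μ m ^ 2) + d ^ 2 / 2 := by
    linear_combination phaseVel_sq hμ.le (m + d) + phaseVel_sq hμ.le (m - d) -
      2 * phaseVel_sq hμ.le m
  calc _ ≤ |2 * (phaseVel μ (m + d) * phaseVel μ (m - d) - phaseVel μ m ^ 2) + d ^ 2 / 2| /
        (4 * √μ) :=
        abs_sub_le_of_mul_add_eq key (by positivity)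
          (by linarith [sqrt_le_phaseVel (μ := μ) (m + d), sqrt_le_phaseVel (μ := μ) (m - d),
            sqrt_le_phaseVel (μ := μ) m])
    _ ≤ (2 * (A * d ^ 2) + d ^ 2 / 2) / (4 * √μ) := by
        gcongr
        refine (abs_add_le _ _).trans ?_
        rw [abs_mul, abs_two, abs_of_nonneg (by positivity : (0 : ℝ) ≤ d ^ 2 / 2)]
        linarith [hprod m d hd hm]
    _ = _ := by ring

lemma exists_phaseVel_second_order_le (hμ : 0 < μ) (R : ℝ) :
    ∃ B > 0, ∀ m d, |d| ≤ m → m ≤ R →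
      m * |phaseVel μ (m + d) + phaseVel μ (m - d) - 2 * phaseVel μ m| +
        |d| * |phaseVel μ (m + d) - phaseVel μ (m - d)| ≤ B * m * d ^ 2 := by
  obtain ⟨B, hB, hsum⟩ := exists_abs_phaseVel_add_sub_two_mul_le hμ R
  refine ⟨B + 1 / (2 * √μ), by positivity, fun m d hd hm => ?_⟩
  have hm0 : 0 ≤ m := (abs_nonneg d).trans hd
  calc _ ≤ m * (B * d ^ 2) + |d| * (|m * d| / (2 * √μ)) := by
        gcongr
        exacts [hsum m d hd hm, abs_phaseVel_sub_phaseVel_le hμ m d]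
    _ = _ := by
        rw [abs_mul, abs_of_nonneg hm0, ← sq_abs d]
        ring

lemma exists_abs_disp_div_add_sub_half_le (hμ : 0 < μ) (R : ℝ) :
    ∃ C > 0, ∀ m d, |d| < m → m ≤ R →
      |disp μ m / (disp μ (m + d) + disp μ (m - d)) - 1 / 2| ≤ C * d ^ 2 := by
  obtain ⟨B, hB, hsecond⟩ := exists_phaseVel_second_order_le hμ R
  refine ⟨B / (4 * √μ), by positivity, fun m d hd hm => ?_⟩
  obtain ⟨hp, hl⟩ : 0 < m + d ∧ 0 < m - d := by constructor <;> linarith [abs_lt.1 hd]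
  have hm0 : 0 < m := by linarith
  rw [disp_eq_mul_phaseVel hp.le, disp_eq_mul_phaseVel hl.le, disp_eq_mul_phaseVel hm0.le]
  set S := (m + d) * phaseVel μ (m + d) + (m - d) * phaseVel μ (m - d)
  have hS : 2 * m * √μ ≤ S := by
    nlinarith [mul_le_mul_of_nonneg_left (sqrt_le_phaseVel (μ := μ) (m + d)) hp.le,
      mul_le_mul_of_nonneg_left (sqrt_le_phaseVel (μ := μ) (m - d)) hl.le]
  have hSpos : 0 < S := hS.trans_lt' (by positivity)
  have hdiff : |S - 2 * (m * phaseVel μ m)| ≤ B * m * d ^ 2 := by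
    calc |S - 2 * (m * phaseVel μ m)|
        = |m * (phaseVel μ (m + d) + phaseVel μ (m - d) - 2 * phaseVel μ m) +
            d * (phaseVel μ (m + d) - phaseVel μ (m - d))| := by
          congr 1
          simp only [S]
          ring
      _ ≤ _ := by
          refine (abs_add_le _ _).trans ?_
          rw [abs_mul, abs_mul, abs_of_pos hm0]
          exact hsecond m d hd.le hm
  calc |m * phaseVel μ m / S - 1 / 2| = |S - 2 * (m * phaseVel μ m)| / (2 * S) := by
        rw [abs_sub_comm,
          show 1 / 2 - m * phaseVel μ m / S = (S - 2 * (m * phaseVel μ m)) / (2 * S) by field_simp,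
          abs_div, abs_of_pos (by positivity : (0 : ℝ) < 2 * S)]
    _ ≤ B * m * d ^ 2 / (2 * (2 * m * √μ)) := by gcongr
    _ = _ := by
        field_simp
        ring

lemma exists_abs_mul_div_disp_mul_disp_sub_le (hμ : 0 < μ) (R : ℝ) :
    ∃ C > 0, ∀ m d, |d| < m → m ≤ R →
      |(m + d) * (m - d) / (disp μ (m + d) * disp μ (m - d)) - m ^ 2 / disp μ m ^ 2| ≤
        C * d ^ 2 := by
  obtain ⟨A, hA, hprod⟩ := exists_abs_phaseVel_mul_sub_sq_le hμ R
  refine ⟨A / μ ^ 2, by positivity, fun m d hd hm => ?_⟩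
  obtain ⟨hp, hl⟩ : 0 < m + d ∧ 0 < m - d := by constructor <;> linarith [abs_lt.1 hd]
  have hm0 : 0 < m := by linarith
  have := phaseVel_pos hμ m
  have := phaseVel_pos hμ (m + d)
  have := phaseVel_pos hμ (m - d)
  rw [disp_eq_mul_phaseVel hp.le, disp_eq_mul_phaseVel hl.le, disp_eq_mul_phaseVel hm0.le,
    show (m + d) * (m - d) / ((m + d) * phaseVel μ (m + d) * ((m - d) * phaseVel μ (m - d))) -
        m ^ 2 / (m * phaseVel μ m) ^ 2 =
      -((phaseVel μ (m + d) * phaseVel μ (m - d) - phaseVel μ m ^ 2) /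
        (phaseVel μ (m + d) * phaseVel μ (m - d) * phaseVel μ m ^ 2)) by
      field_simp
      ring,
    abs_neg, abs_div,
    abs_of_pos (by positivity : 0 < phaseVel μ (m + d) * phaseVel μ (m - d) * phaseVel μ m ^ 2)]
  calc _ ≤ A * d ^ 2 / (μ * μ) := by
        gcongr
        · exact hprod m d hd.le hm
        · exact le_phaseVel_mul_phaseVel hμ.le _ _
        · rw [sq]
          exact le_phaseVel_mul_phaseVel hμ.le m m
    _ = _ := by ring

lemma exists_abs_phaseVel_add_mul_sq_le (hμ : 0 < μ) (c R : ℝ) :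
    ∃ C > 0, ∀ m d, |d| ≤ m → m ≤ R →
      |(phaseVel μ (m + d) + c * (m + d)) * (phaseVel μ (m - d) + c * (m - d)) -
        (phaseVel μ m + c * m) ^ 2| ≤ C * d ^ 2 := by
  obtain ⟨A, hA, hprod⟩ := exists_abs_phaseVel_mul_sub_sq_le hμ R
  obtain ⟨B, hB, hsecond⟩ := exists_phaseVel_second_order_le hμ R
  refine ⟨A + |c| * (B * |R|) + c ^ 2, by positivity, fun m d hd hm => ?_⟩
  have hcross : |m * (phaseVel μ (m + d) + phaseVel μ (m - d) - 2 * phaseVel μ m) -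
      d * (phaseVel μ (m + d) - phaseVel μ (m - d))| ≤ B * |R| * d ^ 2 := by
    calc _ ≤ _ := abs_sub _ _
      _ = _ := by rw [abs_mul, abs_mul, abs_of_nonneg ((abs_nonneg d).trans hd)]
      _ ≤ B * m * d ^ 2 := hsecond m d hd hm
      _ ≤ B * |R| * d ^ 2 := by gcongr; exact hm.trans (le_abs_self R)
  calc _ = |(phaseVel μ (m + d) * phaseVel μ (m - d) - phaseVel μ m ^ 2) +
        c * (m * (phaseVel μ (m + d) + phaseVel μ (m - d) - 2 * phaseVel μ m) -
          d * (phaseVel μ (m + d) - phaseVel μ (m - d))) - c ^ 2 * d ^ 2| := by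
        congr 1
        ring
    _ ≤ A * d ^ 2 + |c| * (B * |R| * d ^ 2) + c ^ 2 * d ^ 2 := by
        refine (abs_sub _ _).trans
          (add_le_add ((abs_add_le _ _).trans (add_le_add (hprod m d hd hm) ?_)) ?_)
        · rw [abs_mul]
          exact mul_le_mul_of_nonneg_left hcross (abs_nonneg c)
        · rw [abs_of_nonneg (by positivity)]
    _ = _ := by ring

lemma exists_abs_sig_mul_sig_mul_sqrt_disp_sub_le (hμ : 0 < μ) (R : ℝ) :
    ∃ C > 0, ∀ m d, |d| < m → m ≤ R →
      |sig μ (m + d) * sig μ (m - d) * √(disp μ (m + d) * disp μ (m - d)) -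
        sig μ m ^ 2 * disp μ m| ≤ C * d ^ 2 := by
  obtain ⟨C, hC, h⟩ := exists_abs_phaseVel_add_mul_sq_le hμ (1 / 2) R
  refine ⟨C, hC, fun m d hd hm => ?_⟩
  obtain ⟨hp, hl⟩ : 0 < m + d ∧ 0 < m - d := by constructor <;> linarith [abs_lt.1 hd]
  rw [sig_mul_sig_mul_sqrt_disp hμ.le hp hl, sig_sq_mul_disp hμ.le (by linarith), ← sub_div,
    abs_div, abs_two]
  calc _ ≤ C * d ^ 2 / 2 := by
        gcongr
        exact (le_of_eq (by ring_nf)).trans (h m d hd.le hm)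
    _ ≤ C * d ^ 2 := by linarith [mul_nonneg hC.le (sq_nonneg d)]

lemma exists_abs_gam_mul_gam_mul_sqrt_disp_sub_le (hμ : 0 < μ) (R : ℝ) :
    ∃ C > 0, ∀ m d, |d| < m → m ≤ R →
      |gam μ (m + d) * gam μ (m - d) * √(disp μ (m + d) * disp μ (m - d)) -
        gam μ m ^ 2 * disp μ m| ≤ C * d ^ 2 := by
  obtain ⟨C, hC, h⟩ := exists_abs_phaseVel_add_mul_sq_le hμ (-1 / 2) R
  refine ⟨C, hC, fun m d hd hm => ?_⟩
  obtain ⟨hp, hl⟩ : 0 < m + d ∧ 0 < m - d := by constructor <;> linarith [abs_lt.1 hd]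
  rw [gam_mul_gam_mul_sqrt_disp hμ.le hp hl, gam_sq_mul_disp hμ.le (by linarith), ← sub_div,
    abs_div, abs_two]
  calc _ ≤ C * d ^ 2 / 2 := by
        gcongr
        exact (le_of_eq (by ring_nf)).trans (h m d hd.le hm)
    _ ≤ C * d ^ 2 := by linarith [mul_nonneg hC.le (sq_nonneg d)]

end

theorem stmt18_general (μ : ℝ) (hμ : 0 < μ) (T : ℝ) :
    ∃ C > 0, ∀ t s : ℝ, 0 < |s| → |s| < t → t ≤ T →
      |disp μ (t/2) / (disp μ ((t+s)/2) + disp μ ((t-s)/2)) - 1/2| ≤ C * s^2 ∧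
      |((t+s)/2) * ((t-s)/2) / (disp μ ((t+s)/2) * disp μ ((t-s)/2))
          - t^2 / (4 * (disp μ (t/2))^2)| ≤ C * s^2 ∧
      |sig μ ((t+s)/2) * sig μ ((t-s)/2)
            * Real.sqrt (disp μ ((t+s)/2) * disp μ ((t-s)/2))
          - (sig μ (t/2))^2 * disp μ (t/2)| ≤ C * s^2 ∧
      |gam μ ((t+s)/2) * gam μ ((t-s)/2)
            * Real.sqrt (disp μ ((t+s)/2) * disp μ ((t-s)/2))
          - (gam μ (t/2))^2 * disp μ (t/2)| ≤ C * s^2 := by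
  obtain ⟨C₁, hC₁, h₁⟩ := exists_abs_disp_div_add_sub_half_le hμ (T / 2)
  obtain ⟨C₂, hC₂, h₂⟩ := exists_abs_mul_div_disp_mul_disp_sub_le hμ (T / 2)
  obtain ⟨C₃, hC₃, h₃⟩ := exists_abs_sig_mul_sig_mul_sqrt_disp_sub_le hμ (T / 2)
  obtain ⟨C₄, hC₄, h₄⟩ := exists_abs_gam_mul_gam_mul_sqrt_disp_sub_le hμ (T / 2)
  refine ⟨C₁ + C₂ + C₃ + C₄, by positivity, fun t s _ hst htT => ?_⟩
  have hd : |s / 2| < t / 2 := by rw [abs_div, abs_two]; linarith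
  have hm : t / 2 ≤ T / 2 := by linarith
  have hscale : ∀ C > 0, C ≤ C₁ + C₂ + C₃ + C₄ →
      C * (s / 2) ^ 2 ≤ (C₁ + C₂ + C₃ + C₄) * s ^ 2 :=
    fun C hC hCle => by nlinarith [sq_nonneg s]
  rw [show (t + s) / 2 = t / 2 + s / 2 by ring, show (t - s) / 2 = t / 2 - s / 2 by ring,
    show t ^ 2 / (4 * disp μ (t / 2) ^ 2) = (t / 2) ^ 2 / disp μ (t / 2) ^ 2 by ring]
  exact ⟨(h₁ _ _ hd hm).trans (hscale _ hC₁ (by linarith)),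
    (h₂ _ _ hd hm).trans (hscale _ hC₂ (by linarith)),
    (h₃ _ _ hd hm).trans (hscale _ hC₃ (by linarith)),
    (h₄ _ _ hd hm).trans (hscale _ hC₄ (by linarith))⟩

theorem stmt18 (μ : ℝ) (hμ : 0 < μ) (T : ℝ) (hT : 0 < T) :
    ∃ C > 0, ∀ t s : ℝ, 0 < |s| → |s| < t → t ≤ T →
      |disp μ (t/2) / (disp μ ((t+s)/2) + disp μ ((t-s)/2)) - 1/2| ≤ C * s^2 ∧
      |((t+s)/2) * ((t-s)/2) / (disp μ ((t+s)/2) * disp μ ((t-s)/2))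
          - t^2 / (4 * (disp μ (t/2))^2)| ≤ C * s^2 ∧
      |sig μ ((t+s)/2) * sig μ ((t-s)/2)
            * Real.sqrt (disp μ ((t+s)/2) * disp μ ((t-s)/2))
          - (sig μ (t/2))^2 * disp μ (t/2)| ≤ C * s^2 ∧
      |gam μ ((t+s)/2) * gam μ ((t-s)/2)
            * Real.sqrt (disp μ ((t+s)/2) * disp μ ((t-s)/2))
          - (gam μ (t/2))^2 * disp μ (t/2)| ≤ C * s^2 :=
  stmt18_general μ hμ T
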